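/- arXiv:0804.4328 — 6 statements merged into one kernel-verified Lean document; each statement's English description precedes it below -/
import Mathlib

section
/- Let G be a C[θ, θ^{-1}]-module with connection, regular singular at θ = 0, with V-filtration V_θ^•G, and let G₀ be a C[θ^{-1}]-lattice of G. Suppose G'^0 is a V-solution to the Birkhoff problem for G₀, i.e., a free C[θ]-submodule of G stable by θ∂_θ with C[θ,θ^{-1}]·G'^0 = G, and such that for all γ: G₀ ∩ V_θ^γ G = ⊕_{j≥0} θ'^j (G₀ ∩ G'^0 ∩ V_θ^{γ+j}G) where θ' = θ^{-1}. Then for any γ ∈ R, the inclusion (θ' - 1)(G₀ ∩ V_θ^{γ+1}G) ⊆ [(θ'-1)G₀] ∩ (G₀ ∩ V_θ^γ G) is an equality. -/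
/-!
Write `t = θ⁻¹`. The V-solution splits `G₀ ∩ V^β = (G₀ ∩ G'⁰ ∩ V^β) ⊕ t (G₀ ∩ V^{β+1})`.
If `x ∈ G₀ ∩ V^β` and `(t - 1) x ∈ V^β`, write `t x = w + t u` along this splitting. Then
`w = t (x - u)` lies in `t (G₀ ∩ V^β)` as well as in `G₀ ∩ G'⁰ ∩ V^{β-1}`, so the splitting at
`β - 1` forces `w = 0`, i.e. `x = u ∈ V^{β+1}`. Starting from `x ∈ V^{γ-ℓ}` (exhaustivity) and
climbing one step at a time gives `x ∈ V^{γ+1}`, which is the nontrivial inclusion.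
-/

open Submodule Function

section VSolution

variable {R M : Type*} [Ring R] [AddCommGroup M] [Module R M]
  (t : M →ₗ[R] M) (L W : Submodule R M) (V : ℝ → Submodule R M)

theorem map_pow_succ_inf_eq_map_map_pow (β : ℝ) (j : ℕ) :
    map (t ^ (j + 1)) (L ⊓ W ⊓ V (β + (j + 1 : ℕ))) =
      map t (map (t ^ j) (L ⊓ W ⊓ V (β + 1 + j))) := by
  rw [pow_succ', Module.End.mul_eq_comp, map_comp, Nat.cast_succ, add_comm (j : ℝ), ← add_assoc]

variable {t L W V}

theorem inf_eq_inf_sup_map_inf_add_one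
    (hsol : ∀ γ : ℝ, L ⊓ V γ = ⨆ j : ℕ, map (t ^ j) (L ⊓ W ⊓ V (γ + j))) (β : ℝ) :
    L ⊓ V β = L ⊓ W ⊓ V β ⊔ map t (L ⊓ V (β + 1)) := by
  rw [hsol β, hsol (β + 1), Submodule.map_iSup, ← sup_iSup_nat_succ]
  simp only [map_pow_succ_inf_eq_map_map_pow, pow_zero, Module.End.one_eq_id, map_id,
    Nat.cast_zero, add_zero]

theorem disjoint_inf_map_inf_add_one
    (hsol : ∀ γ : ℝ, L ⊓ V γ = ⨆ j : ℕ, map (t ^ j) (L ⊓ W ⊓ V (γ + j)))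
    (hindep : ∀ (γ : ℝ) (j : ℕ), Disjoint (map (t ^ j) (L ⊓ W ⊓ V (γ + j)))
      (⨆ j' : ℕ, ⨆ _ : j' ≠ j, map (t ^ j') (L ⊓ W ⊓ V (γ + j')))) (β : ℝ) :
    Disjoint (L ⊓ W ⊓ V β) (map t (L ⊓ V (β + 1))) := by
  have h := hindep β 0
  simp only [pow_zero, Module.End.one_eq_id, map_id, Nat.cast_zero, add_zero] at h
  refine h.mono_right ?_
  rw [hsol, Submodule.map_iSup]
  refine iSup_le fun j => ?_
  rw [← map_pow_succ_inf_eq_map_map_pow]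
  exact le_iSup₂_of_le (j + 1) j.succ_ne_zero le_rfl

section Splitting

variable (hV : Antitone V) (ht : Injective t) (hLt : ∀ x ∈ L, t x ∈ L)
  (hsplit : ∀ β : ℝ, L ⊓ V β = L ⊓ W ⊓ V β ⊔ map t (L ⊓ V (β + 1)))
  (hdisj : ∀ β : ℝ, Disjoint (L ⊓ W ⊓ V β) (map t (L ⊓ V (β + 1))))
include hV ht hLt hsplit hdisj

theorem mem_add_one_of_sub_mem {β : ℝ} {x : M} (hxL : x ∈ L) (hxV : x ∈ V β)
    (hsub : t x - x ∈ V β) : x ∈ V (β + 1) := by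
  have htx : t x ∈ L ⊓ V β := ⟨hLt x hxL, by simpa using add_mem hsub hxV⟩
  rw [hsplit β] at htx
  obtain ⟨w, hw, _, ⟨u, hu, rfl⟩, hwu⟩ := mem_sup.mp htx
  have hw_eq : w = t (x - u) := by rw [map_sub, ← hwu, add_sub_cancel_right]
  have hxu : x - u ∈ L ⊓ V (β - 1 + 1) := by
    rw [sub_add_cancel]
    exact ⟨sub_mem hxL hu.1, sub_mem hxV (hV (le_add_of_nonneg_right zero_le_one) hu.2)⟩
  have hw_zero : w = 0 := disjoint_def.mp (hdisj (β - 1)) w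
    ⟨hw.1, hV (sub_le_self β zero_le_one) hw.2⟩ (hw_eq ▸ mem_map_of_mem hxu)
  have hux : u = x := ht (by rwa [hw_zero, zero_add] at hwu)
  exact hux ▸ hu.2

theorem mem_add_one_of_mem_sub_natCast {γ : ℝ} {x : M} (hxL : x ∈ L)
    (hsub : t x - x ∈ V γ) (n : ℕ) (hxV : x ∈ V (γ - n)) : x ∈ V (γ + 1) := by
  induction n with
  | zero => exact mem_add_one_of_sub_mem hV ht hLt hsplit hdisj hxL (by simpa using hxV) hsub
  | succ n ih =>
    have h := mem_add_one_of_sub_mem hV ht hLt hsplit hdisj hxL hxV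
      (hV (sub_le_self γ (n + 1).cast_nonneg) hsub)
    exact ih (by rwa [Nat.cast_succ, sub_add_eq_sub_sub, sub_add_cancel] at h)

end Splitting

theorem map_sub_id_inf_add_one_eq (hV : Antitone V) (ht : Injective t)
    (hLt : ∀ x ∈ L, t x ∈ L) (htV : ∀ β : ℝ, ∀ x ∈ V (β + 1), t x ∈ V β)
    (hexh : ∀ (γ : ℝ) (x : M), x ∈ L → ∃ ℓ : ℕ, x ∈ V (γ - ℓ))
    (hsol : ∀ γ : ℝ, L ⊓ V γ = ⨆ j : ℕ, map (t ^ j) (L ⊓ W ⊓ V (γ + j)))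
    (hindep : ∀ (γ : ℝ) (j : ℕ), Disjoint (map (t ^ j) (L ⊓ W ⊓ V (γ + j)))
      (⨆ j' : ℕ, ⨆ _ : j' ≠ j, map (t ^ j') (L ⊓ W ⊓ V (γ + j')))) (γ : ℝ) :
    map (t - LinearMap.id) (L ⊓ V (γ + 1)) = map (t - LinearMap.id) L ⊓ (L ⊓ V γ) := by
  apply le_antisymm
  · rintro _ ⟨x, ⟨hxL, hxV⟩, rfl⟩
    exact ⟨mem_map_of_mem hxL, sub_mem (hLt x hxL) hxL,
      sub_mem (htV γ x hxV) (hV (le_add_of_nonneg_right zero_le_one) hxV)⟩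
  · rintro _ ⟨⟨x, hxL, rfl⟩, -, hsub⟩
    obtain ⟨ℓ, hxV⟩ := hexh γ x hxL
    exact mem_map_of_mem ⟨hxL, mem_add_one_of_mem_sub_natCast hV ht hLt
      (inf_eq_inf_sup_map_inf_add_one hsol) (disjoint_inf_map_inf_add_one hsol hindep)
      hxL hsub ℓ hxV⟩

end VSolution

theorem stmt_9_general {G : Type*} [AddCommGroup G] [Module ℂ G]
    (θ : G ≃ₗ[ℂ] G) (V : ℝ → Submodule ℂ G)
    (hVdec : ∀ γ γ' : ℝ, γ ≤ γ' → V γ' ≤ V γ)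
    (hVθ : ∀ γ : ℝ, Submodule.map (θ : G →ₗ[ℂ] G) (V γ) = V (γ + 1))
    (G₀ Gp0 : Submodule ℂ G)
    (hG₀θ' : ∀ x ∈ G₀, θ.symm x ∈ G₀)
    (hexh : ∀ (γ : ℝ) (x : G), x ∈ G₀ → ∃ ℓ : ℕ, x ∈ V (γ - ℓ))
    (hsol : ∀ γ : ℝ, G₀ ⊓ V γ =
      ⨆ j : ℕ, Submodule.map ((θ.symm : G →ₗ[ℂ] G) ^ j) (G₀ ⊓ Gp0 ⊓ V (γ + j)))
    (hindep : ∀ (γ : ℝ) (j : ℕ),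
      Disjoint (Submodule.map ((θ.symm : G →ₗ[ℂ] G) ^ j) (G₀ ⊓ Gp0 ⊓ V (γ + j)))
        (⨆ j' : ℕ, ⨆ _ : j' ≠ j,
          Submodule.map ((θ.symm : G →ₗ[ℂ] G) ^ j') (G₀ ⊓ Gp0 ⊓ V (γ + j')))) :
    ∀ γ : ℝ,
      Submodule.map ((θ.symm : G →ₗ[ℂ] G) - LinearMap.id) (G₀ ⊓ V (γ + 1))
        = Submodule.map ((θ.symm : G →ₗ[ℂ] G) - LinearMap.id) G₀ ⊓ (G₀ ⊓ V γ) := by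
  have hθV : ∀ β : ℝ, ∀ x ∈ V (β + 1), θ.symm x ∈ V β := fun β x hx =>
    (map_symm_eq_iff θ).mpr (hVθ β) ▸ mem_map_of_mem hx
  exact map_sub_id_inf_add_one_eq hVdec θ.symm.injective hG₀θ' hθV hexh hsol hindep

/-- Let `G` be a regular singular `ℂ[θ,θ⁻¹]`-module with connection
(`θ` acting as a `ℂ`-linear automorphism), with decreasing exhaustive V-filtration
`V^•G` (indexed by `ℝ`, with `θ·V^γ = V^{γ+1}`), and let `G₀` be a `ℂ[θ']`-lattice
(`θ' = θ⁻¹`).  Let `G'⁰` be a V-solution to the Birkhoff problem for `G₀`: a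
`θ`-stable, `θ∂_θ`-stable submodule generating `G` over `ℂ[θ,θ⁻¹]` such that for all
`γ`, `G₀ ∩ V^γ G = ⊕_{j≥0} θ'^j (G₀ ∩ G'⁰ ∩ V^{γ+j}G)`.  Then for every `γ ∈ ℝ`,
`(θ' - 1)(G₀ ∩ V^{γ+1}G) = [(θ'-1)G₀] ∩ (G₀ ∩ V^γ G)`. -/
theorem stmt_9 {G : Type*} [AddCommGroup G] [Module ℂ G]
    (θ : G ≃ₗ[ℂ] G) (Dθ : G →ₗ[ℂ] G) (V : ℝ → Submodule ℂ G)
    (hVdec : ∀ γ γ' : ℝ, γ ≤ γ' → V γ' ≤ V γ)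
    (hVθ : ∀ γ : ℝ, Submodule.map (θ : G →ₗ[ℂ] G) (V γ) = V (γ + 1))
    (G₀ Gp0 : Submodule ℂ G)
    (hG₀θ' : ∀ x ∈ G₀, θ.symm x ∈ G₀)
    (hlattice : ∀ x : G, ∃ n : ℕ, ((θ.symm : G →ₗ[ℂ] G) ^ n) x ∈ G₀)
    (hexh : ∀ (γ : ℝ) (x : G), x ∈ G₀ → ∃ ℓ : ℕ, x ∈ V (γ - ℓ))
    (hvanish : ∃ Γ : ℝ, ∀ γ : ℝ, Γ ≤ γ → G₀ ⊓ V γ = ⊥)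
    (hGp0θ : ∀ x ∈ Gp0, θ x ∈ Gp0)
    (hGp0D : ∀ x ∈ Gp0, Dθ x ∈ Gp0)
    (hGp0full : ∀ x : G, x ∈ ⨆ n : ℤ,
      Submodule.map ((θ ^ n : G ≃ₗ[ℂ] G) : G →ₗ[ℂ] G) Gp0)
    (hsol : ∀ γ : ℝ, G₀ ⊓ V γ =
      ⨆ j : ℕ, Submodule.map ((θ.symm : G →ₗ[ℂ] G) ^ j) (G₀ ⊓ Gp0 ⊓ V (γ + j)))
    (hindep : ∀ (γ : ℝ) (j : ℕ),
      Disjoint (Submodule.map ((θ.symm : G →ₗ[ℂ] G) ^ j) (G₀ ⊓ Gp0 ⊓ V (γ + j)))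
        (⨆ j' : ℕ, ⨆ _ : j' ≠ j,
          Submodule.map ((θ.symm : G →ₗ[ℂ] G) ^ j') (G₀ ⊓ Gp0 ⊓ V (γ + j')))) :
    ∀ γ : ℝ,
      Submodule.map ((θ.symm : G →ₗ[ℂ] G) - LinearMap.id) (G₀ ⊓ V (γ + 1))
        = Submodule.map ((θ.symm : G →ₗ[ℂ] G) - LinearMap.id) G₀ ⊓ (G₀ ⊓ V γ) :=
  stmt_9_general θ V hVdec hVθ G₀ Gp0 hG₀θ' hexh hsol hindep
end

section
/- With the notation and hypotheses of the V-solution to the Birkhoff problem, the natural morphism G₀ ∩ V_θ^γ G → G₀/(θ'-1)G₀ induces an isomorphism from G₀ ∩ G'^0 ∩ V_θ^γ G onto the image of G₀ ∩ V_θ^γ G in G₀/(θ'-1)G₀, for every γ ∈ R. In particular, taking γ very negative, a C-basis of G₀ ∩ G'^0 maps to a C-basis of G₀/(θ'-1)G₀. -/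
/-!
Surjectivity: an element `x = ∑ θ'^j w_j` of `G₀ ∩ V^γ`, with `w_j ∈ G₀ ∩ G'⁰ ∩ V^{γ+j}`,
is congruent modulo `(θ' - 1)G₀` to `∑ w_j ∈ G₀ ∩ G'⁰ ∩ V^γ`, since
`θ'^j - 1 = (θ' - 1)(1 + ⋯ + θ'^{j-1})`.

Injectivity: if `x ∈ G₀ ∩ G'⁰ ∩ V^γ` equals `θ'y - y` with `y = ∑_{j<n} θ'^j w_j ∈ G₀ ∩ V^γ`,
then `θ'y - y - x = 0` is a decomposition at level `γ - 1` whose only component of degree `n`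
is `θ'^n w_{n-1}`; directness forces it to vanish, and induction on `n` gives `y = 0`, so `x = 0`.
-/

namespace Submodule

variable {R M : Type*} [Ring R] [AddCommGroup M] [Module R M]

theorem map_mkQ_eq_of_forall_exists_sub_mem {p A B : Submodule R M} (hAB : A ≤ B)
    (h : ∀ x ∈ B, ∃ z ∈ A, x - z ∈ p) : A.map p.mkQ = B.map p.mkQ := by
  refine le_antisymm (map_mono hAB) ?_
  rintro _ ⟨x, hx, rfl⟩
  obtain ⟨z, hz, hxz⟩ := h x hx
  refine ⟨z, hz, (Submodule.Quotient.eq p).2 ?_⟩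
  rw [← neg_sub]
  exact neg_mem hxz

theorem pow_apply_sub_self_mem_map_sub_one {T : M →ₗ[R] M} {S : Submodule R M}
    (hTS : ∀ x ∈ S, T x ∈ S) {y : M} (hy : y ∈ S) (j : ℕ) :
    (T ^ j) y - y ∈ S.map (T - 1) := by
  refine ⟨(∑ i ∈ Finset.range j, T ^ i) y, ?_, ?_⟩
  · rw [LinearMap.sum_apply]
    exact sum_mem fun i _ => Module.End.pow_apply_mem_of_forall_mem i hTS y hy
  · rw [← Module.End.mul_apply, mul_geom_sum, LinearMap.sub_apply, Module.End.one_apply]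

theorem exists_mem_biSup_lt_of_mem_iSup {p : ℕ → Submodule R M} {y : M}
    (hy : y ∈ ⨆ j, p j) : ∃ n, y ∈ ⨆ j < n, p j := by
  rw [← biSup_lt_eq_iSup] at hy
  have hmono : Monotone fun n => ⨆ j < n, p j := fun m n hmn =>
    biSup_mono fun j hj => lt_of_lt_of_le hj hmn
  exact (mem_iSup_of_directed _ hmono.directed_le).1 hy

end Submodule

namespace Birkhoff

open Submodule

variable {R M : Type*} [Ring R] [AddCommGroup M] [Module R M]
variable (T : M →ₗ[R] M) (W : ℝ → Submodule R M)

/-- `piece θ' (fun γ => G₀ ⊓ G'⁰ ⊓ V γ) γ j` is the summand `θ'^j (G₀ ∩ G'⁰ ∩ V^{γ+j})` of the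
V-solution decomposition of `G₀ ∩ V^γ`. -/
def piece (γ : ℝ) (j : ℕ) : Submodule R M :=
  Submodule.map (T ^ j) (W (γ + j))

variable {T W}

theorem piece_anti (hW : Antitone W) {γ γ' : ℝ} (h : γ' ≤ γ) (j : ℕ) :
    piece T W γ j ≤ piece T W γ' j :=
  map_mono (hW (by linarith))

theorem mem_piece_zero {γ : ℝ} {x : M} (hx : x ∈ W γ) : x ∈ piece T W γ 0 :=
  ⟨x, by simpa using hx, by simp⟩

theorem apply_mem_piece_pred {γ : ℝ} {j : ℕ} {x : M} (hx : x ∈ piece T W γ j) :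
    T x ∈ piece T W (γ - 1) (j + 1) := by
  obtain ⟨w, hw, rfl⟩ := hx
  refine ⟨w, ?_, by rw [pow_succ', Module.End.mul_apply]⟩
  rwa [show γ - 1 + ((j + 1 : ℕ) : ℝ) = γ + j by push_cast; ring]

theorem exists_sub_mem_map_sub_one {S : Submodule R M} (hW : Antitone W)
    (hWS : ∀ γ, W γ ≤ S) (hTS : ∀ x ∈ S, T x ∈ S) {γ : ℝ} {x : M}
    (hx : x ∈ ⨆ j, piece T W γ j) : ∃ z ∈ W γ, x - z ∈ S.map (T - 1) := by
  refine iSup_induction _ (motive := fun x => ∃ z ∈ W γ, x - z ∈ S.map (T - 1)) hx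
    ?_ ⟨0, zero_mem _, by simp⟩ ?_
  · rintro j _ ⟨w, hw, rfl⟩
    exact ⟨w, hW (by simp) hw, pow_apply_sub_self_mem_map_sub_one hTS (hWS _ hw) j⟩
  · rintro x y hx hy
    obtain ⟨z, hz, hxz⟩ := hx
    obtain ⟨z', hz', hyz'⟩ := hy
    exact ⟨z + z', add_mem hz hz', by rw [add_sub_add_comm]; exact add_mem hxz hyz'⟩

theorem map_sub_one_biSup_piece_le (hW : Antitone W) (γ : ℝ) (n : ℕ) :
    (⨆ j < n, piece T W γ j).map (T - 1) ≤ ⨆ j < n + 1, piece T W (γ - 1) j := by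
  refine map_le_iff_le_comap.2 (iSup₂_le fun j hj x hx => ?_)
  rw [mem_comap, LinearMap.sub_apply, Module.End.one_apply]
  exact sub_mem (mem_iSup_of_mem (j + 1) (mem_iSup_of_mem (by omega) (apply_mem_piece_pred hx)))
    (mem_iSup_of_mem j (mem_iSup_of_mem (by omega) (piece_anti hW (by linarith) j hx)))

theorem eq_zero_of_mem_biSup_lt_of_apply_sub_self_eq (hW : Antitone W)
    (hT : Function.Injective T) {γ : ℝ} (hind : iSupIndep (piece T W (γ - 1))) {x : M}
    (hx : x ∈ W γ) (n : ℕ) : ∀ y ∈ ⨆ j < n, piece T W γ j, T y - y = x → y = 0 := by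
  induction n with
  | zero => simp
  | succ n ih =>
    intro y hy hxy
    rw [Nat.iSup_lt_succ] at hy
    obtain ⟨a, ha, b, hb, rfl⟩ := mem_sup.1 hy
    have hTb : T b = x + b - (T - 1) a := by
      rw [LinearMap.sub_apply, Module.End.one_apply, ← hxy, map_add]
      abel
    have hx' : x ∈ piece T W (γ - 1) 0 := mem_piece_zero (hW (by simp) hx)
    have hb' : b ∈ piece T W (γ - 1) n := piece_anti hW (by simp) n hb
    have hlow : x + b - (T - 1) a ∈ ⨆ j ∈ {j | j < n + 1}, piece T W (γ - 1) j :=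
      sub_mem (add_mem (mem_iSup_of_mem 0 (mem_iSup_of_mem n.succ_pos hx'))
        (mem_iSup_of_mem n (mem_iSup_of_mem n.lt_succ_self hb')))
        (map_sub_one_biSup_piece_le hW γ n ⟨a, ha, rfl⟩)
    have hdisj := hind.disjoint_biSup (y := {j | j < n + 1}) (lt_irrefl (n + 1))
    have hTb0 : T b = 0 := disjoint_def.1 hdisj _ (apply_mem_piece_pred hb) (hTb ▸ hlow)
    have hb0 : b = 0 := hT (hTb0.trans (map_zero T).symm)
    rw [hb0, add_zero] at hxy ⊢
    exact ih a ha hxy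

theorem eq_zero_of_apply_sub_self_eq (hW : Antitone W) (hT : Function.Injective T) {γ : ℝ}
    (hind : iSupIndep (piece T W (γ - 1))) {x y : M} (hx : x ∈ W γ)
    (hy : y ∈ ⨆ j, piece T W γ j) (hxy : T y - y = x) : x = 0 := by
  obtain ⟨n, hn⟩ := exists_mem_biSup_lt_of_mem_iSup hy
  rw [← hxy, eq_zero_of_mem_biSup_lt_of_apply_sub_self_eq hW hT hind hx n y hn hxy, map_zero,
    sub_zero]

end Birkhoff

theorem stmt_10_general {G : Type*} [AddCommGroup G] [Module ℂ G]
    (θ : G ≃ₗ[ℂ] G) (V : ℝ → Submodule ℂ G)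
    (hVdec : ∀ γ γ' : ℝ, γ ≤ γ' → V γ' ≤ V γ)
    (G₀ Gp0 : Submodule ℂ G)
    (hG₀θ' : ∀ x ∈ G₀, θ.symm x ∈ G₀)
    (hexh : ∀ (γ : ℝ) (x : G), x ∈ G₀ → ∃ ℓ : ℕ, x ∈ V (γ - ℓ))
    (hsol : ∀ γ : ℝ, G₀ ⊓ V γ =
      ⨆ j : ℕ, Submodule.map ((θ.symm : G →ₗ[ℂ] G) ^ j) (G₀ ⊓ Gp0 ⊓ V (γ + j)))
    (hindep : ∀ (γ : ℝ) (j : ℕ),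
      Disjoint (Submodule.map ((θ.symm : G →ₗ[ℂ] G) ^ j) (G₀ ⊓ Gp0 ⊓ V (γ + j)))
        (⨆ j' : ℕ, ⨆ _ : j' ≠ j,
          Submodule.map ((θ.symm : G →ₗ[ℂ] G) ^ j') (G₀ ⊓ Gp0 ⊓ V (γ + j'))))
    (K : Submodule ℂ ↥G₀)
    (hK : ∀ x : ↥G₀, x ∈ K ↔ ∃ y ∈ G₀, θ.symm y - y = (x : G)) :
    (∀ γ : ℝ,
      Submodule.map K.mkQ (Submodule.comap G₀.subtype (Gp0 ⊓ V γ))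
        = Submodule.map K.mkQ (Submodule.comap G₀.subtype (V γ)) ∧
      Disjoint (Submodule.comap G₀.subtype (Gp0 ⊓ V γ)) K) ∧
    Submodule.map K.mkQ (Submodule.comap G₀.subtype Gp0) = ⊤ ∧
    Disjoint (Submodule.comap G₀.subtype Gp0) K := by
  set T : G →ₗ[ℂ] G := (θ.symm : G →ₗ[ℂ] G)
  set W : ℝ → Submodule ℂ G := fun γ => G₀ ⊓ Gp0 ⊓ V γ
  have hW : Antitone W := fun γ γ' h => inf_le_inf_left _ (hVdec γ γ' h)
  have hK' : ∀ x : G₀, x ∈ K ↔ (x : G) ∈ G₀.map (T - 1) := by simp [hK, T]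
  have hrep (γ : ℝ) (x : G₀) (hx : (x : G) ∈ V γ) :
      ∃ z ∈ Submodule.comap G₀.subtype (Gp0 ⊓ V γ), x - z ∈ K := by
    obtain ⟨z, hz, hxz⟩ := Birkhoff.exists_sub_mem_map_sub_one hW
      (fun _ => inf_le_left.trans inf_le_left) hG₀θ' ((hsol γ).le ⟨x.2, hx⟩)
    exact ⟨⟨z, hz.1.1⟩, ⟨hz.1.2, hz.2⟩, (hK' _).2 hxz⟩
  have hdisj : Disjoint (Submodule.comap G₀.subtype Gp0) K := by
    refine Submodule.disjoint_def.2 fun x hxP hxK => ?_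
    obtain ⟨y, hy, hxy⟩ := (hK' x).1 hxK
    obtain ⟨ℓ, hxℓ⟩ := hexh 0 x x.2
    obtain ⟨ℓ', hyℓ'⟩ := hexh 0 y hy
    set γ := min (0 - (ℓ : ℝ)) (0 - ℓ')
    have hxγ : (x : G) ∈ V γ := hVdec _ _ (min_le_left _ _) hxℓ
    have hyγ : y ∈ V γ := hVdec _ _ (min_le_right _ _) hyℓ'
    exact Subtype.ext (Birkhoff.eq_zero_of_apply_sub_self_eq hW θ.symm.injective (hindep (γ - 1))
      ⟨⟨x.2, hxP⟩, hxγ⟩ ((hsol γ).le ⟨hy, hyγ⟩) hxy)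
  refine ⟨fun γ => ⟨?_, hdisj.mono_left (Submodule.comap_mono inf_le_left)⟩, ?_, hdisj⟩
  · exact Submodule.map_mkQ_eq_of_forall_exists_sub_mem (Submodule.comap_mono inf_le_right)
      (hrep γ)
  rw [← K.range_mkQ, ← Submodule.map_top]
  refine Submodule.map_mkQ_eq_of_forall_exists_sub_mem le_top fun x _ => ?_
  obtain ⟨ℓ, hxℓ⟩ := hexh 0 x x.2
  obtain ⟨z, hz, hxz⟩ := hrep _ x hxℓ
  exact ⟨z, hz.1, hxz⟩

/-- With the notation and hypotheses of the V-solution to the Birkhoff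
problem (see STATEMENT 9), for every `γ ∈ ℝ` the natural map
`G₀ ∩ V^γ G → G₀/(θ'-1)G₀` induces an isomorphism of `G₀ ∩ G'⁰ ∩ V^γ G` onto the image
of `G₀ ∩ V^γ G`; i.e. (with `K = (θ'-1)G₀ ⊆ G₀` and `mkQ` the quotient map) the images
of `G₀ ∩ G'⁰ ∩ V^γ` and of `G₀ ∩ V^γ` agree and `G₀ ∩ G'⁰ ∩ V^γ` meets `K` trivially.
In particular (`γ` very negative) a `ℂ`-basis of `G₀ ∩ G'⁰` maps to a `ℂ`-basis of
`G₀/(θ'-1)G₀`: the image of `G₀ ∩ G'⁰` is everything and it meets `K` trivially. -/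
theorem stmt_10 {G : Type*} [AddCommGroup G] [Module ℂ G]
    (θ : G ≃ₗ[ℂ] G) (Dθ : G →ₗ[ℂ] G) (V : ℝ → Submodule ℂ G)
    (hVdec : ∀ γ γ' : ℝ, γ ≤ γ' → V γ' ≤ V γ)
    (hVθ : ∀ γ : ℝ, Submodule.map (θ : G →ₗ[ℂ] G) (V γ) = V (γ + 1))
    (G₀ Gp0 : Submodule ℂ G)
    (hG₀θ' : ∀ x ∈ G₀, θ.symm x ∈ G₀)
    (hlattice : ∀ x : G, ∃ n : ℕ, ((θ.symm : G →ₗ[ℂ] G) ^ n) x ∈ G₀)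
    (hexh : ∀ (γ : ℝ) (x : G), x ∈ G₀ → ∃ ℓ : ℕ, x ∈ V (γ - ℓ))
    (hvanish : ∃ Γ : ℝ, ∀ γ : ℝ, Γ ≤ γ → G₀ ⊓ V γ = ⊥)
    (hGp0θ : ∀ x ∈ Gp0, θ x ∈ Gp0)
    (hGp0D : ∀ x ∈ Gp0, Dθ x ∈ Gp0)
    (hGp0full : ∀ x : G, x ∈ ⨆ n : ℤ,
      Submodule.map ((θ ^ n : G ≃ₗ[ℂ] G) : G →ₗ[ℂ] G) Gp0)
    (hsol : ∀ γ : ℝ, G₀ ⊓ V γ =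
      ⨆ j : ℕ, Submodule.map ((θ.symm : G →ₗ[ℂ] G) ^ j) (G₀ ⊓ Gp0 ⊓ V (γ + j)))
    (hindep : ∀ (γ : ℝ) (j : ℕ),
      Disjoint (Submodule.map ((θ.symm : G →ₗ[ℂ] G) ^ j) (G₀ ⊓ Gp0 ⊓ V (γ + j)))
        (⨆ j' : ℕ, ⨆ _ : j' ≠ j,
          Submodule.map ((θ.symm : G →ₗ[ℂ] G) ^ j') (G₀ ⊓ Gp0 ⊓ V (γ + j'))))
    (K : Submodule ℂ ↥G₀)
    (hK : ∀ x : ↥G₀, x ∈ K ↔ ∃ y ∈ G₀, θ.symm y - y = (x : G)) :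
    (∀ γ : ℝ,
      Submodule.map K.mkQ (Submodule.comap G₀.subtype (Gp0 ⊓ V γ))
        = Submodule.map K.mkQ (Submodule.comap G₀.subtype (V γ)) ∧
      Disjoint (Submodule.comap G₀.subtype (Gp0 ⊓ V γ)) K) ∧
    Submodule.map K.mkQ (Submodule.comap G₀.subtype Gp0) = ⊤ ∧
    Disjoint (Submodule.comap G₀.subtype Gp0) K :=
  stmt_10_general θ V hVdec G₀ Gp0 hG₀θ' hexh hsol hindep K hK
end

section
/- Deligne's filtration is decreasing: with M̃ a regular holonomic D-module on a disc with coordinate x, localized along x=0, filtered by a good filtration F^•M and V-filtration V^•M, and F_Del^γ M̃ := ∑_{k≥0} (∂_x + x^{-2})^k x^{-1} F^{[γ]+k} V^{γ-[γ]} M (where [γ] is the smallest integer ≥ γ), we have F_Del^{γ'} M̃ ⊆ F_Del^γ M̃ whenever γ' ≥ γ. -/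
/-!
Write `D = ∂_x + x⁻²` (`Deligne.op`) and `G(p, β) = ∑_k D^k x⁻¹ (F^{p+k} V^β)` (`Deligne.sum`),
so that `F_Del^γ = G(⌈γ⌉, γ - ⌈γ⌉)`.
The identity `x⁻¹ = D x - ∂_x x` gives
`D^k x⁻¹ m = D^{k+1} x⁻¹ (x² m) - D^k x⁻¹ (x ∂_x x m)`, and for `m ∈ F^{p+1+k} V^{β-1}` both
`x² m ∈ F^{p+(k+1)} V^β` and `x ∂_x x m ∈ F^{p+k} V^β`; hence `G(p+1, β-1) ⊆ G(p, β)`.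
With `n = ⌈γ'⌉ - ⌈γ⌉ ≥ 0` we have `γ' - ⌈γ'⌉ ≥ (γ - ⌈γ⌉) - n`, so iterating the shift `n` times
and using that `V` is decreasing gives `F_Del^{γ'} ⊆ F_Del^γ`.
-/

namespace Deligne

variable {R N : Type*} [Ring R] [AddCommGroup N] [Module R N]

def op (x : N ≃ₗ[R] N) (dx : N →ₗ[R] N) : Module.End R N :=
  dx + (x.symm : N →ₗ[R] N) ∘ₗ (x.symm : N →ₗ[R] N)

def sum (x : N ≃ₗ[R] N) (dx : N →ₗ[R] N) (FV : ℤ → ℝ → Submodule R N) (p : ℤ) (β : ℝ) :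
    Submodule R N :=
  ⨆ k : ℕ, (FV (p + k) β).map ((op x dx ^ k) ∘ₗ (x.symm : N →ₗ[R] N))

variable (x : N ≃ₗ[R] N) (dx : N →ₗ[R] N) (FV : ℤ → ℝ → Submodule R N)

theorem op_apply_sub (m : N) : op x dx (x m) - dx (x m) = x.symm m := by
  simp [op]

theorem op_pow_comp_symm_apply (k : ℕ) (m : N) :
    ((op x dx ^ k) ∘ₗ (x.symm : N →ₗ[R] N)) m =
      ((op x dx ^ (k + 1)) ∘ₗ (x.symm : N →ₗ[R] N)) (x (x m)) -
        ((op x dx ^ k) ∘ₗ (x.symm : N →ₗ[R] N)) (x (dx (x m))) := by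
  simp only [LinearMap.comp_apply, LinearEquiv.coe_coe, LinearEquiv.symm_apply_apply, pow_succ,
    Module.End.mul_apply, ← map_sub, op_apply_sub]

theorem sum_antitone (hV : ∀ p, Antitone (FV p)) (p : ℤ) : Antitone (sum x dx FV p) :=
  fun _ _ hβ => iSup_mono fun _ => Submodule.map_mono (hV _ hβ)

theorem sum_succ_sub_one_le (hV : ∀ p, Antitone (FV p))
    (hx : ∀ (p : ℤ) (β : ℝ), ∀ m ∈ FV p β, x m ∈ FV p (β + 1))
    (hd : ∀ (p : ℤ) (β : ℝ), ∀ m ∈ FV p β, dx m ∈ FV (p - 1) (β - 1)) (p : ℤ) (β : ℝ) :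
    sum x dx FV (p + 1) (β - 1) ≤ sum x dx FV p β := by
  refine iSup_le fun k => ?_
  rintro _ ⟨m, hm, rfl⟩
  have hxm := hx _ _ m hm
  have hxxm : x (x m) ∈ FV (p + (k + 1 : ℕ)) β := by
    have := hx _ _ _ hxm
    rw [Nat.cast_succ, ← add_assoc, add_right_comm]
    exact hV _ (by linarith) this
  have hxdxm : x (dx (x m)) ∈ FV (p + k) β := by
    have := hx _ _ _ (hd _ _ _ hxm)
    rw [add_right_comm, add_sub_cancel_right] at this
    exact hV _ (by linarith) this
  rw [op_pow_comp_symm_apply]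
  exact Submodule.sub_mem _ (Submodule.mem_iSup_of_mem (k + 1) (Submodule.mem_map_of_mem hxxm))
    (Submodule.mem_iSup_of_mem k (Submodule.mem_map_of_mem hxdxm))

theorem sum_le_of_le (hV : ∀ p, Antitone (FV p))
    (hx : ∀ (p : ℤ) (β : ℝ), ∀ m ∈ FV p β, x m ∈ FV p (β + 1))
    (hd : ∀ (p : ℤ) (β : ℝ), ∀ m ∈ FV p β, dx m ∈ FV (p - 1) (β - 1))
    {p p' : ℤ} {β β' : ℝ} (hp : p ≤ p') (hβ : β ≤ β' + (p' - p : ℤ)) :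
    sum x dx FV p' β' ≤ sum x dx FV p β := by
  obtain ⟨n, rfl⟩ := Int.exists_add_of_le hp
  induction n generalizing p β with
  | zero => simpa using sum_antitone x dx FV hV p (by simpa using hβ)
  | succ n ih =>
    have hp' : p + ((n + 1 : ℕ) : ℤ) = p + 1 + n := by push_cast; ring
    rw [hp'] at hβ ⊢
    calc sum x dx FV (p + 1 + n) β'
        ≤ sum x dx FV (p + 1) (β - 1) := ih (by omega) (by push_cast at hβ ⊢; linarith)
      _ ≤ sum x dx FV p β := sum_succ_sub_one_le x dx FV hV hx hd p β

end Deligne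

theorem stmt_11_general {N : Type*} [AddCommGroup N] [Module ℂ N]
    (x : N ≃ₗ[ℂ] N) (dx : N →ₗ[ℂ] N)
    (FV : ℤ → ℝ → Submodule ℂ N)
    (hVdec : ∀ (p : ℤ) (β β' : ℝ), β ≤ β' → FV p β' ≤ FV p β)
    (hxFV : ∀ (p : ℤ) (β : ℝ), ∀ m ∈ FV p β, x m ∈ FV p (β + 1))
    (hdFV : ∀ (p : ℤ) (β : ℝ), ∀ m ∈ FV p β, dx m ∈ FV (p - 1) (β - 1))
    (Del : ℝ → Submodule ℂ N)
    (hDel : ∀ γ : ℝ, Del γ =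
      ⨆ k : ℕ, Submodule.map
        (((dx + (x.symm : N →ₗ[ℂ] N) ∘ₗ (x.symm : N →ₗ[ℂ] N)) ^ k)
          ∘ₗ (x.symm : N →ₗ[ℂ] N))
        (FV (⌈γ⌉ + k) (γ - (⌈γ⌉ : ℝ)))) :
    ∀ γ γ' : ℝ, γ ≤ γ' → Del γ' ≤ Del γ := by
  intro γ γ' hγ
  rw [hDel, hDel]
  exact Deligne.sum_le_of_le x dx FV hVdec hxFV hdFV (Int.ceil_mono hγ) (by push_cast; linarith)

/-- Deligne's filtration is decreasing.  We work on the localized module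
`M̃` (a `ℂ`-module `N` on which `x` acts invertibly and `∂_x = dx` acts with
`[dx, x] = 1`), with combined data `FV p β = F^p M ∩ V^β M` satisfying the usual
properties of a good filtration and of the V-filtration.  With `⌈γ⌉` the smallest
integer `≥ γ` and
`F_Del^γ M̃ = ∑_{k≥0} (∂_x + x⁻²)^k x⁻¹ (F^{⌈γ⌉+k} V^{γ-⌈γ⌉} M)`,
one has `F_Del^{γ'} ⊆ F_Del^γ` whenever `γ ≤ γ'`. -/
theorem stmt_11 {N : Type*} [AddCommGroup N] [Module ℂ N]
    (x : N ≃ₗ[ℂ] N) (dx : N →ₗ[ℂ] N)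
    (hrel : dx ∘ₗ (x : N →ₗ[ℂ] N) - (x : N →ₗ[ℂ] N) ∘ₗ dx = LinearMap.id)
    (FV : ℤ → ℝ → Submodule ℂ N)
    (hFdec : ∀ (p p' : ℤ) (β : ℝ), p ≤ p' → FV p' β ≤ FV p β)
    (hVdec : ∀ (p : ℤ) (β β' : ℝ), β ≤ β' → FV p β' ≤ FV p β)
    (hxFV : ∀ (p : ℤ) (β : ℝ), ∀ m ∈ FV p β, x m ∈ FV p (β + 1))
    (hdFV : ∀ (p : ℤ) (β : ℝ), ∀ m ∈ FV p β, dx m ∈ FV (p - 1) (β - 1))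
    (Del : ℝ → Submodule ℂ N)
    (hDel : ∀ γ : ℝ, Del γ =
      ⨆ k : ℕ, Submodule.map
        (((dx + (x.symm : N →ₗ[ℂ] N) ∘ₗ (x.symm : N →ₗ[ℂ] N)) ^ k)
          ∘ₗ (x.symm : N →ₗ[ℂ] N))
        (FV (⌈γ⌉ + k) (γ - (⌈γ⌉ : ℝ)))) :
    ∀ γ γ' : ℝ, γ ≤ γ' → Del γ' ≤ Del γ :=
  stmt_11_general x dx FV hVdec hxFV hdFV Del hDel
end

section
/- Let M = C[t]⟨∂_t⟩/(t∂_t - α) with α ∈ (0,1). Then the exponentially twisted de Rham cohomology, i.e., the cohomology of the two-term complex M --(∂_t - 1)--> M, is concentrated in degree one and is one-dimensional over C. -/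
/-!
On the basis `e_n = t^{n+α}`, `∂_t` is the weighted shift `e_n ↦ (n + α) e_{n-1}`, whose weights
never vanish because `α ∉ ℤ`. If `g ≠ 0` has support in `[a, b]`, then `(∂_t - 1) g` has nonzero
coefficients at `a - 1` (from `∂_t`) and at `b` (from `-1`). Hence `∂_t - 1` is injective and its
image contains no `e_m`, so the class of `e_0` in the cokernel is nonzero; and it spans, since
`e_n ≡ (n + α) e_{n-1}` modulo the image.
-/

section WeightedShift

variable {K : Type*} [Field K] {c : ℤ → K} {D : (ℤ →₀ K) →ₗ[K] (ℤ →₀ K)}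

theorem weightedShift_apply (hD : ∀ n, D (Finsupp.single n 1) = c n • Finsupp.single (n - 1) 1)
    (f : ℤ →₀ K) (n : ℤ) : D f n = c (n + 1) * f (n + 1) := by
  induction f using Finsupp.induction_linear with
  | zero => simp
  | add f g hf hg => simp only [map_add, Finsupp.add_apply, hf, hg, mul_add]
  | single a b =>
    rw [← mul_one b, ← Finsupp.smul_single', map_smul, hD, Finsupp.smul_apply,
      Finsupp.smul_apply, Finsupp.smul_apply, Finsupp.single_apply, Finsupp.single_apply]
    by_cases h : a = n + 1
    · subst h; simp [mul_comm]
    · simp [h, show a - 1 ≠ n by omega]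

theorem weightedShift_sub_apply_pred_min'
    (hD : ∀ n, D (Finsupp.single n 1) = c n • Finsupp.single (n - 1) 1)
    {f : ℤ →₀ K} (hf : f.support.Nonempty) :
    (D f - f) (f.support.min' hf - 1) = c (f.support.min' hf) * f (f.support.min' hf) := by
  have hlt : f.support.min' hf - 1 ∉ f.support := fun h => by
    have := f.support.min'_le _ h; omega
  rw [Finsupp.sub_apply, weightedShift_apply hD, Finsupp.notMem_support_iff.mp hlt, sub_zero,
    sub_add_cancel]

theorem weightedShift_sub_apply_max'
    (hD : ∀ n, D (Finsupp.single n 1) = c n • Finsupp.single (n - 1) 1)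
    {f : ℤ →₀ K} (hf : f.support.Nonempty) :
    (D f - f) (f.support.max' hf) = -f (f.support.max' hf) := by
  have hgt : f.support.max' hf + 1 ∉ f.support := fun h => by
    have := f.support.le_max' _ h; omega
  rw [Finsupp.sub_apply, weightedShift_apply hD, Finsupp.notMem_support_iff.mp hgt, mul_zero,
    zero_sub]

theorem ker_sub_id_eq_bot (hD : ∀ n, D (Finsupp.single n 1) = c n • Finsupp.single (n - 1) 1)
    (hc : ∀ n, c n ≠ 0) : LinearMap.ker (D - LinearMap.id) = ⊥ := by
  refine LinearMap.ker_eq_bot'.mpr fun f hTf => ?_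
  by_contra hf0
  have hf : f.support.Nonempty := Finsupp.support_nonempty_iff.mpr hf0
  have hmin := weightedShift_sub_apply_pred_min' hD hf
  rw [show D f - f = 0 from hTf, Finsupp.zero_apply] at hmin
  exact mul_ne_zero (hc _) (Finsupp.mem_support_iff.mp (f.support.min'_mem hf)) hmin.symm

theorem single_notMem_range_sub_id
    (hD : ∀ n, D (Finsupp.single n 1) = c n • Finsupp.single (n - 1) 1) (hc : ∀ n, c n ≠ 0)
    (m : ℤ) : Finsupp.single m 1 ∉ LinearMap.range (D - LinearMap.id) := by
  rintro ⟨g, hTg⟩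
  have hg : g.support.Nonempty := by
    rw [Finsupp.support_nonempty_iff]
    rintro rfl
    simp only [map_zero] at hTg
    exact one_ne_zero (Finsupp.single_eq_zero.mp hTg.symm)
  have hmin := weightedShift_sub_apply_pred_min' hD hg
  have hmax := weightedShift_sub_apply_max' hD hg
  have hmin_mem := Finsupp.mem_support_iff.mp (g.support.min'_mem hg)
  have hmax_mem := Finsupp.mem_support_iff.mp (g.support.max'_mem hg)
  rw [show D g - g = Finsupp.single m 1 from hTg, Finsupp.single_apply] at hmin hmax
  have h₁ : m = g.support.min' hg - 1 := by
    by_contra h; rw [if_neg h] at hmin; exact mul_ne_zero (hc _) hmin_mem hmin.symm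
  have h₂ : m = g.support.max' hg := by
    by_contra h; rw [if_neg h] at hmax; exact hmax_mem (neg_eq_zero.mp hmax.symm)
  have := g.support.min'_le_max' hg
  omega

theorem mk_single_mem_span_mk_single_zero
    (hD : ∀ n, D (Finsupp.single n 1) = c n • Finsupp.single (n - 1) 1) (hc : ∀ n, c n ≠ 0)
    (n : ℤ) :
    (LinearMap.range (D - LinearMap.id)).mkQ (Finsupp.single n 1) ∈
      K ∙ (LinearMap.range (D - LinearMap.id)).mkQ (Finsupp.single 0 1) := by
  set π := (LinearMap.range (D - LinearMap.id)).mkQ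
  have hstep : ∀ n, π (Finsupp.single n 1) = c n • π (Finsupp.single (n - 1) 1) := by
    intro n
    rw [← map_smul, ← hD, eq_comm, ← sub_eq_zero, ← map_sub, Submodule.mkQ_apply,
      Submodule.Quotient.mk_eq_zero]
    exact ⟨Finsupp.single n 1, rfl⟩
  induction n using Int.induction_on with
  | zero => exact Submodule.mem_span_singleton_self _
  | succ k ih =>
    rw [hstep (k + 1), add_sub_cancel_right]
    exact Submodule.smul_mem _ _ ih
  | pred k ih =>
    have := hstep (-k)
    rw [← inv_smul_eq_iff₀ (hc _)] at this
    rw [← this]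
    exact Submodule.smul_mem _ _ ih

theorem finrank_quotient_range_sub_id_eq_one
    (hD : ∀ n, D (Finsupp.single n 1) = c n • Finsupp.single (n - 1) 1) (hc : ∀ n, c n ≠ 0) :
    Module.finrank K ((ℤ →₀ K) ⧸ LinearMap.range (D - LinearMap.id)) = 1 := by
  set π := (LinearMap.range (D - LinearMap.id)).mkQ
  have hspan : ∀ f, π f ∈ K ∙ π (Finsupp.single 0 1) := by
    intro f
    induction f using Finsupp.induction_linear with
    | zero => simp
    | add f g hf hg => rw [map_add]; exact add_mem hf hg
    | single n b =>
      rw [← mul_one b, ← Finsupp.smul_single', map_smul]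
      exact Submodule.smul_mem _ _ (mk_single_mem_span_mk_single_zero hD hc n)
  refine finrank_eq_one (π (Finsupp.single 0 1)) ?_ fun w => ?_
  · rw [Submodule.mkQ_apply, ne_eq, Submodule.Quotient.mk_eq_zero]
    exact single_notMem_range_sub_id hD hc 0
  · obtain ⟨f, rfl⟩ := Submodule.mkQ_surjective _ w
    exact Submodule.mem_span_singleton.mp (hspan f)

end WeightedShift

theorem intCast_add_ofReal_ne_zero {α : ℝ} (h0 : 0 < α) (h1 : α < 1) (n : ℤ) :
    (n : ℂ) + (α : ℂ) ≠ 0 := by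
  have hn : (n : ℝ) + α ≠ 0 := by
    rcases le_or_gt 0 n with hn | hn
    · have : (0 : ℝ) ≤ n := by exact_mod_cast hn
      linarith
    · have : (n : ℝ) ≤ -1 := by exact_mod_cast Int.le_sub_one_of_lt hn
      linarith
  exact_mod_cast hn

/-- Let `M = ℂ[t]⟨∂_t⟩/(t∂_t - α)` with `α ∈ (0, 1)`.  As a `ℂ`-vector
space, `M ≅ t^α ℂ[t, t⁻¹]` with basis `e_n = t^{n+α}` (`n ∈ ℤ`), modeled by `ℤ →₀ ℂ`,
on which `∂_t` acts as the linear map `D` with `D e_n = (n + α) e_{n-1}`.  Then the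
exponentially twisted de Rham complex `0 → M --(∂_t - 1)--> M → 0` (in degrees 0, 1)
has cohomology concentrated in degree one, of dimension one: `∂_t - 1` is injective
and its cokernel is one-dimensional. -/
theorem stmt_13 (α : ℝ) (h0 : 0 < α) (h1 : α < 1)
    (D : (ℤ →₀ ℂ) →ₗ[ℂ] (ℤ →₀ ℂ))
    (hD : ∀ n : ℤ, D (Finsupp.single n 1) = ((n : ℂ) + (α : ℂ)) • Finsupp.single (n - 1) 1) :
    LinearMap.ker (D - LinearMap.id) = ⊥ ∧
    Module.finrank ℂ ((ℤ →₀ ℂ) ⧸ LinearMap.range (D - LinearMap.id)) = 1 :=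
  ⟨ker_sub_id_eq_bot hD (intCast_add_ofReal_ne_zero h0 h1),
    finrank_quotient_range_sub_id_eq_one hD (intCast_add_ofReal_ne_zero h0 h1)⟩
end

section
/- Let H be a free C[η]-module of finite rank with a connection ∇ having a pole of order at most two at η = 0 and no other pole. Let m ∈ H and let b(η∂_η)m = η P(η, η∂_η)m be the minimal monic differential equation satisfied by m, with b ∈ C[s] nonzero and P a polynomial operator. If, after the rescaling substitution η = τ'z, the operator ∏_β (τ'∂_{τ'} - βz)^{ν_β} - z^{deg b}(τ'z) P(τ'z, z^{-1}τ'∂_{τ'}) has coefficients without poles in z, then the Newton polygon of b(η∂_η) - ηP(η, η∂_η) has only slopes 0 and 1. -/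
/-!
For `0 < s < 1` the point `(0, deg b)`, which lies in the support because the leading
coefficient of `b` is nonzero, is the unique minimiser of `i - j s` on the support: the
no-pole condition `j ≤ i + deg b` gives `i - j s ≥ i (1 - s) - (deg b) s`. So no slope lies
in `(0, 1)`, and the Katz bound excludes slopes `> 1`.
-/

def IsNewtonSlope {R : Type*} [Zero R] (a : ℕ → ℕ → R) (s : ℝ) : Prop :=
  ∃ i j i' j' : ℕ, (i, j) ≠ (i', j') ∧ a i j ≠ 0 ∧ a i' j' ≠ 0 ∧
    (i : ℝ) - j * s = (i' : ℝ) - j' * s ∧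
    ∀ i'' j'' : ℕ, a i'' j'' ≠ 0 → (i : ℝ) - j * s ≤ (i'' : ℝ) - j'' * s

lemma eq_zero_and_eq_of_sub_mul_le {s : ℝ} (hs0 : 0 < s) (hs1 : s < 1) {p q d : ℕ}
    (hqd : q ≤ p + d) (hle : (p : ℝ) - q * s ≤ 0 - d * s) : p = 0 ∧ q = d := by
  have hqdR : (q : ℝ) ≤ p + d := by exact_mod_cast hqd
  have hp : p = 0 := by
    have : (p : ℝ) * (1 - s) ≤ 0 := by nlinarith
    exact_mod_cast le_antisymm (nonpos_of_mul_nonpos_left this (by linarith)) p.cast_nonneg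
  subst hp
  have hdq : (d : ℝ) ≤ q := le_of_mul_le_mul_right (by linarith) hs0
  exact ⟨rfl, le_antisymm (by simpa using hqd) (by exact_mod_cast hdq)⟩

lemma not_isNewtonSlope_of_lt_one {R : Type*} [Zero R] {a : ℕ → ℕ → R} {d : ℕ}
    (had : a 0 d ≠ 0) (hsupp : ∀ i j, a i j ≠ 0 → j ≤ i + d) {s : ℝ} (hs0 : 0 < s)
    (hs1 : s < 1) : ¬ IsNewtonSlope a s := by
  rintro ⟨i, j, i', j', hne, ha, ha', heq, hmin⟩
  have hle : (i : ℝ) - j * s ≤ 0 - d * s := by exact_mod_cast hmin 0 d had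
  obtain ⟨rfl, rfl⟩ := eq_zero_and_eq_of_sub_mul_le hs0 hs1 (hsupp i j ha) hle
  obtain ⟨rfl, rfl⟩ := eq_zero_and_eq_of_sub_mul_le hs0 hs1 (hsupp i' j' ha') (heq ▸ hle)
  exact hne rfl

theorem stmt_15_general (b : Polynomial ℂ) (hb : b ≠ 0)
    (a : ℕ → ℕ → ℂ)
    (hb0 : ∀ j : ℕ, a 0 j = b.coeff j)
    (hKatz : ∀ s : ℝ, 1 < s →
      ¬ ∃ i j i' j' : ℕ, (i, j) ≠ (i', j') ∧ a i j ≠ 0 ∧ a i' j' ≠ 0 ∧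
          (i : ℝ) - j * s = (i' : ℝ) - j' * s ∧
          ∀ i'' j'' : ℕ, a i'' j'' ≠ 0 → (i : ℝ) - j * s ≤ (i'' : ℝ) - j'' * s)
    (hnopole : ∀ i j : ℕ, a i j ≠ 0 → (j : ℤ) ≤ (i : ℤ) + (b.natDegree : ℤ)) :
    ∀ s : ℝ, 0 < s →
      (∃ i j i' j' : ℕ, (i, j) ≠ (i', j') ∧ a i j ≠ 0 ∧ a i' j' ≠ 0 ∧
          (i : ℝ) - j * s = (i' : ℝ) - j' * s ∧
          ∀ i'' j'' : ℕ, a i'' j'' ≠ 0 → (i : ℝ) - j * s ≤ (i'' : ℝ) - j'' * s) →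
      s = 1 := by
  intro s hs hslope
  have hlead : a 0 b.natDegree ≠ 0 := by
    rw [hb0]
    exact Polynomial.leadingCoeff_ne_zero.mpr hb
  have hsupp : ∀ i j, a i j ≠ 0 → j ≤ i + b.natDegree := fun i j h ↦ by
    exact_mod_cast hnopole i j h
  rcases lt_trichotomy s 1 with hlt | heq | hgt
  · exact absurd hslope (not_isNewtonSlope_of_lt_one hlead hsupp hs hlt)
  · exact heq
  · exact absurd hslope (hKatz s hgt)

/-- Let `H` be a free `ℂ[η]`-module with a connection having a pole of
order at most two at `η = 0` and no other pole, `m ∈ H`, and let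
`b(η∂_η)m = η P(η, η∂_η)m` be the minimal equation of `m`.  Write the operator
`b(η∂_η) - ηP(η, η∂_η) = ∑ a_{i,j} η^i (η∂_η)^j` (so `a_{0,j} = coeff_j b` and
`a_{i+1,j} = -P_{i,j}`).  A slope `s > 0` of its Newton polygon means that the minimum
of `i - j·s` over the support of `a` is attained at two distinct points.  The pole
order ≤ 2 hypothesis gives Katz invariant ≤ 1: no slope `s > 1` occurs.  If after the
rescaling substitution `η = τ'z` the operator
`∏_β (τ'∂_{τ'} - βz)^{ν_β} - z^{deg b}(τ'z)P(τ'z, z⁻¹τ'∂_{τ'})` has no poles in `z`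
(its monomial `a_{i,j} τ'^i z^{deg b + i - j} (τ'∂_{τ'})^j` has `j ≤ i + deg b`
whenever `a_{i,j} ≠ 0`), then the Newton polygon has only slopes `0` and `1`: every
slope `s > 0` equals `1`. -/
theorem stmt_15 (b : Polynomial ℂ) (hb : b ≠ 0)
    (P : ℕ → ℕ → ℂ) (a : ℕ → ℕ → ℂ)
    (hfin : {ij : ℕ × ℕ | a ij.1 ij.2 ≠ 0}.Finite)
    (hb0 : ∀ j : ℕ, a 0 j = b.coeff j)
    (hP : ∀ i j : ℕ, a (i + 1) j = -P i j)
    (hKatz : ∀ s : ℝ, 1 < s →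
      ¬ ∃ i j i' j' : ℕ, (i, j) ≠ (i', j') ∧ a i j ≠ 0 ∧ a i' j' ≠ 0 ∧
          (i : ℝ) - j * s = (i' : ℝ) - j' * s ∧
          ∀ i'' j'' : ℕ, a i'' j'' ≠ 0 → (i : ℝ) - j * s ≤ (i'' : ℝ) - j'' * s)
    (hnopole : ∀ i j : ℕ, a i j ≠ 0 → (j : ℤ) ≤ (i : ℤ) + (b.natDegree : ℤ)) :
    ∀ s : ℝ, 0 < s →
      (∃ i j i' j' : ℕ, (i, j) ≠ (i', j') ∧ a i j ≠ 0 ∧ a i' j' ≠ 0 ∧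
          (i : ℝ) - j * s = (i' : ℝ) - j' * s ∧
          ∀ i'' j'' : ℕ, a i'' j'' ≠ 0 → (i : ℝ) - j * s ≤ (i'' : ℝ) - j'' * s) →
      s = 1 :=
  stmt_15_general b hb a hb0 hKatz hnopole
end

section
/- Let G be a C[θ',θ'^{-1}]-module with connection and let G₀ ⊂ G be a free C[θ']-lattice stable under θ'²∂_{θ'}. Suppose G decomposes as G_reg ⊕ G_irr compatibly with G₀, where on G_irr the induced endomorphism of θ'²∂_{θ'} on G_{irr,0}/θ'G_{irr,0} has no eigenvalue 0, and on G_reg the V-filtration satisfies V^{γ+k}(G_{reg,0}/θ'G_{reg,0}) = 0 for k large. Then there exists k₁ such that for all k ≥ k₁, the map θ'²∂_{θ'} : V^{γ+k}(G₀/θ'G₀) → V^{γ+k+1}(G₀/θ'G₀) is surjective. -/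
/-! Once `V^{γ+k}` has no regular part it equals `H_irr`, on which `E` is injective and hence,
by finite dimensionality, surjective. -/

theorem Submodule.le_map_of_mapsTo_of_injOn {R M : Type*} [Ring R] [AddCommGroup M] [Module R M]
    (f : M →ₗ[R] M) (W : Submodule R M) [IsArtinian R W] (hmaps : ∀ x ∈ W, f x ∈ W)
    (hinj : ∀ x ∈ W, f x = 0 → x = 0) : W ≤ W.map f := by
  set g : W →ₗ[R] W := f.restrict hmaps
  have hg : Function.Injective g := by
    rw [← LinearMap.ker_eq_bot, LinearMap.ker_eq_bot']
    intro x hx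
    exact Subtype.ext (hinj x x.2 (congrArg Subtype.val hx))
  intro y hy
  obtain ⟨x, hx⟩ := IsArtinian.surjective_of_injective_endomorphism g hg ⟨y, hy⟩
  exact ⟨x, x.2, congrArg Subtype.val hx⟩

theorem stmt_17_general {H : Type*} [AddCommGroup H] [Module ℂ H] [FiniteDimensional ℂ H]
    (E : H →ₗ[ℂ] H) (V : ℝ → Submodule ℂ H) (Hreg Hirr : Submodule ℂ H)
    (hEirr : ∀ x ∈ Hirr, E x ∈ Hirr)
    (hsplitV : ∀ γ : ℝ, V γ = (V γ ⊓ Hreg) ⊔ (V γ ⊓ Hirr))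
    (hirrfull : ∀ γ : ℝ, Hirr ≤ V γ)
    (hirrinj : ∀ x ∈ Hirr, E x = 0 → x = 0)
    (hregvan : ∀ γ : ℝ, ∃ k₀ : ℕ, ∀ k : ℕ, k₀ ≤ k → V (γ + k) ⊓ Hreg = ⊥) :
    ∀ γ : ℝ, ∃ k₁ : ℕ, ∀ k : ℕ, k₁ ≤ k →
      V (γ + k + 1) ≤ Submodule.map E (V (γ + k)) := by
  intro γ
  obtain ⟨k₀, hk₀⟩ := hregvan γ
  have hV : ∀ k : ℕ, k₀ ≤ k → V (γ + k) = Hirr := by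
    intro k hk
    refine le_antisymm ?_ (hirrfull _)
    rw [hsplitV (γ + k), hk₀ k hk, bot_sup_eq]
    exact inf_le_right
  refine ⟨k₀, fun k hk => ?_⟩
  have hsucc : γ + k + 1 = γ + (k + 1 : ℕ) := by push_cast; ring
  rw [hsucc, hV (k + 1) (by omega), hV k hk]
  exact Hirr.le_map_of_mapsTo_of_injOn E hEirr hirrinj

/-- Let `H = G₀/θ'G₀` (finite dimensional) with the induced endomorphism
`E` of `θ'²∂_{θ'}` and induced V-filtration `V^•`, and suppose `H = H_reg ⊕ H_irr`
compatibly with `E` and `V^•`, where on the irregular part `V^γ ⊇ H_irr` for all `γ`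
and `E` has no eigenvalue `0`, while on the regular part `V^{γ+k} ∩ H_reg = 0` for
`k` large.  Then there exists `k₁` such that for all `k ≥ k₁`, the map
`E : V^{γ+k} → V^{γ+k+1}` is surjective. -/
theorem stmt_17 {H : Type*} [AddCommGroup H] [Module ℂ H] [FiniteDimensional ℂ H]
    (E : H →ₗ[ℂ] H) (V : ℝ → Submodule ℂ H) (Hreg Hirr : Submodule ℂ H)
    (hcompl : IsCompl Hreg Hirr)
    (hEreg : ∀ x ∈ Hreg, E x ∈ Hreg)
    (hEirr : ∀ x ∈ Hirr, E x ∈ Hirr)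
    (hVdec : ∀ γ γ' : ℝ, γ ≤ γ' → V γ' ≤ V γ)
    (hshift : ∀ γ : ℝ, ∀ x ∈ V γ, E x ∈ V (γ + 1))
    (hsplitV : ∀ γ : ℝ, V γ = (V γ ⊓ Hreg) ⊔ (V γ ⊓ Hirr))
    (hirrfull : ∀ γ : ℝ, Hirr ≤ V γ)
    (hirrinj : ∀ x ∈ Hirr, E x = 0 → x = 0)
    (hregvan : ∀ γ : ℝ, ∃ k₀ : ℕ, ∀ k : ℕ, k₀ ≤ k → V (γ + k) ⊓ Hreg = ⊥) :
    ∀ γ : ℝ, ∃ k₁ : ℕ, ∀ k : ℕ, k₁ ≤ k →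
      V (γ + k + 1) ≤ Submodule.map E (V (γ + k)) :=
  stmt_17_general E V Hreg Hirr hEirr hsplitV hirrfull hirrinj hregvan
end
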